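/- arXiv:1902.10270 — 7 statements merged into one kernel-verified Lean document; each statement's English description precedes it below -/
import Mathlib

section
/- Let W be a competitive nondegenerate TLN matrix and θ > 0. A nonempty subset σ ⊆ [n] is the support of a fixed point if and only if (1) the vector x^σ = θ(I - W_σ)^{-1} 1_σ has all entries strictly positive, and (2) Σ_{i∈σ} W_ki x^σ_i + θ ≤ 0 for all k ∉ σ. -/
/-
The fixed-point equation decouples over the support. On `σ` the threshold is inactive, so
`x|σ` solves the linear system `(I - W_σ) x|σ = θ1`, which has the unique solution `x^σ`
since `I - W_σ` is nonsingular; off `σ` the input `∑_{i∈σ} W_ki x_i + θ` must be clipped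
to `0`, which is condition (2). Conversely, extending `x^σ` by zero gives a fixed point.
-/

open Finset

/-- `σ` is the support of a fixed point of the TLN obtained by restricting `W` to the
subnetwork on `τ` (take `τ = univ` for the full network). -/
def fpSupport {n : ℕ} (W : Matrix (Fin n) (Fin n) ℝ) (θ : ℝ)
    (τ σ : Finset (Fin n)) : Prop :=
  σ ⊆ τ ∧ ∃ x : Fin n → ℝ,
    (∀ i, i ∉ τ → x i = 0) ∧
    (∀ i ∈ τ, x i = max 0 ((∑ j ∈ τ, W i j * x j) + θ)) ∧
    (∀ i, 0 < x i ↔ i ∈ σ)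

open Matrix

section Lemmas

variable {ι : Type*} [Fintype ι]

lemma sum_eq_sum_subtype_of_eq_zero {M : Type*} [AddCommMonoid M] {f : ι → M} {σ : Finset ι}
    (hf : ∀ j ∉ σ, f j = 0) : ∑ j, f j = ∑ j : σ, f j :=
  ((sum_coe_sort σ f).trans (Fintype.sum_subset fun j hj => not_imp_comm.1 (hf j) hj)).symm

lemma eq_of_eq_max_zero_of_pos {α : Type*} [Zero α] [LinearOrder α] {x a : α}
    (h : x = max 0 a) (hx : 0 < x) : x = a := by
  rw [h] at hx ⊢
  exact max_eq_right (le_of_not_ge fun ha => hx.ne' (max_eq_left ha))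

variable [DecidableEq ι]

lemma one_sub_mulVec_eq_const_iff {R : Type*} [Ring R] (W : Matrix ι ι R) (y : ι → R)
    (θ : R) : (1 - W) *ᵥ y = (fun _ => θ) ↔ ∀ i, y i = (W *ᵥ y) i + θ := by
  simp only [sub_mulVec, one_mulVec, sub_eq_iff_eq_add', funext_iff, Pi.add_apply]

lemma mulVec_eq_iff_eq_inv_mulVec {R : Type*} [CommRing R] {A : Matrix ι ι R}
    (hA : IsUnit A.det) (y b : ι → R) : A *ᵥ y = b ↔ y = A⁻¹ *ᵥ b := by
  constructor
  · rintro rfl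
    rw [mulVec_mulVec, nonsing_inv_mul A hA, one_mulVec]
  · rintro rfl
    rw [mulVec_mulVec, mul_nonsing_inv A hA, one_mulVec]

end Lemmas

lemma fpSupport_univ_iff {n : ℕ} (W : Matrix (Fin n) (Fin n) ℝ) (θ : ℝ)
    (σ : Finset (Fin n)) :
    fpSupport W θ univ σ ↔
      ∃ y : σ → ℝ,
        ((1 : Matrix σ σ ℝ) - W.submatrix Subtype.val Subtype.val) *ᵥ y = (fun _ => θ) ∧
        (∀ i, 0 < y i) ∧ ∀ k ∉ σ, ∑ i : σ, W k i * y i + θ ≤ 0 := by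
  simp only [fpSupport, subset_univ, mem_univ, not_true_eq_false, true_and, false_implies,
    implies_true, forall_const, one_sub_mulVec_eq_const_iff]
  constructor
  · rintro ⟨x, hfix, hsupp⟩
    have hx0 : ∀ j ∉ σ, x j = 0 := fun j hj =>
      le_antisymm (not_lt.1 fun h => hj ((hsupp j).1 h)) ((hfix j).symm ▸ le_max_left _ _)
    have hsum : ∀ i, ∑ j, W i j * x j = ∑ j : σ, W i j * x j := fun i =>
      sum_eq_sum_subtype_of_eq_zero fun j hj => by rw [hx0 j hj, mul_zero]
    refine ⟨fun i => x i, fun i => ?_, fun i => (hsupp i).2 i.2, fun k hk => ?_⟩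
    · show x i = ∑ j : σ, W i j * x j + θ
      rw [← hsum]
      exact eq_of_eq_max_zero_of_pos (hfix i) ((hsupp i).2 i.2)
    · rw [← hsum, ← hx0 k hk, hfix k]
      exact le_max_right _ _
  · rintro ⟨y, hfix, hpos, hout⟩
    set x : Fin n → ℝ := fun i => if h : i ∈ σ then y ⟨i, h⟩ else 0
    have hsum : ∀ i, ∑ j, W i j * x j = ∑ j : σ, W i j * y j := fun i => by
      rw [sum_eq_sum_subtype_of_eq_zero (σ := σ) fun j hj => by simp [x, hj]]
      simp [x]
    refine ⟨x, fun i => ?_, fun i => ?_⟩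
    · rw [hsum]
      by_cases hi : i ∈ σ
      · have hyi : y ⟨i, hi⟩ = ∑ j : σ, W i j * y j + θ := hfix ⟨i, hi⟩
        simp only [x, dif_pos hi]
        rw [← hyi, max_eq_right (hpos _).le]
      · simp only [x, dif_neg hi]
        exact (max_eq_left (hout i hi)).symm
    · by_cases hi : i ∈ σ
      · simpa [x, hi] using hpos ⟨i, hi⟩
      · simp [x, hi]

theorem stmt_1_general {n : ℕ} (W : Matrix (Fin n) (Fin n) ℝ) (θ : ℝ)
    (hdet : ∀ τ : Finset (Fin n),
      ((1 : Matrix τ τ ℝ) - W.submatrix (Subtype.val) (Subtype.val)).det ≠ 0)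
    (σ : Finset (Fin n)) :
    fpSupport W θ Finset.univ σ ↔
      ((∀ i : σ,
          0 < (((1 : Matrix σ σ ℝ) - W.submatrix (Subtype.val) (Subtype.val))⁻¹.mulVec
                (fun _ => θ)) i) ∧
       (∀ k, k ∉ σ →
          (∑ i : σ, W k i *
            (((1 : Matrix σ σ ℝ) - W.submatrix (Subtype.val) (Subtype.val))⁻¹.mulVec
              (fun _ => θ)) i) + θ ≤ 0)) := by
  rw [fpSupport_univ_iff]
  simp only [mulVec_eq_iff_eq_inv_mulVec (hdet σ).isUnit, exists_eq_left]

theorem stmt_1 {n : ℕ} (W : Matrix (Fin n) (Fin n) ℝ) (θ : ℝ) (hθ : 0 < θ)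
    (hdiag : ∀ i, W i i = 0) (hoff : ∀ i j, i ≠ j → W i j < 0)
    (hdet : ∀ τ : Finset (Fin n),
      ((1 : Matrix τ τ ℝ) - W.submatrix (Subtype.val) (Subtype.val)).det ≠ 0)
    (hcramer : ∀ τ : Finset (Fin n), ∀ i : τ,
      (Matrix.updateCol ((1 : Matrix τ τ ℝ) - W.submatrix (Subtype.val) (Subtype.val)) i
        (fun _ => θ)).det ≠ 0)
    (σ : Finset (Fin n)) (hσ : σ.Nonempty) :
    fpSupport W θ Finset.univ σ ↔
      ((∀ i : σ,
          0 < (((1 : Matrix σ σ ℝ) - W.submatrix (Subtype.val) (Subtype.val))⁻¹.mulVec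
                (fun _ => θ)) i) ∧
       (∀ k, k ∉ σ →
          (∑ i : σ, W k i *
            (((1 : Matrix σ σ ℝ) - W.submatrix (Subtype.val) (Subtype.val))⁻¹.mulVec
              (fun _ => θ)) i) + θ ≤ 0)) :=
  stmt_1_general W θ hdet σ
end

section
/- For any θ > 0 and any competitive nondegenerate TLN W and any σ ⊆ [n], whether σ is the support of a fixed point of (W,θ) does not depend on the choice of θ > 0: if σ supports a fixed point for some θ > 0, it supports a fixed point for all θ > 0. -/
open Finset

/-- The fixed-point equation is positively homogeneous in `(x, θ)`. -/
theorem fpSupport.mul_left {n : ℕ} {W : Matrix (Fin n) (Fin n) ℝ} {θ c : ℝ}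
    {τ σ : Finset (Fin n)} (h : fpSupport W θ τ σ) (hc : 0 < c) :
    fpSupport W (c * θ) τ σ := by
  obtain ⟨hστ, x, hx_out, hx_fix, hx_supp⟩ := h
  refine ⟨hστ, c • x, fun i hi => by simp [hx_out i hi], fun i hi => ?_, fun i => ?_⟩
  · calc (c • x) i = c * max 0 ((∑ j ∈ τ, W i j * x j) + θ) := by
          rw [Pi.smul_apply, smul_eq_mul, ← hx_fix i hi]
      _ = max 0 ((∑ j ∈ τ, W i j * (c • x) j) + c * θ) := by
          rw [mul_max_of_nonneg _ _ hc.le, mul_zero, mul_add, mul_sum]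
          simp only [Pi.smul_apply, smul_eq_mul, mul_left_comm c]
  · rw [Pi.smul_apply, smul_eq_mul, mul_pos_iff_of_pos_left hc, hx_supp]

theorem stmt_2_general {n : ℕ} (W : Matrix (Fin n) (Fin n) ℝ)
    (σ : Finset (Fin n))
    (h : ∃ θ : ℝ, 0 < θ ∧ fpSupport W θ Finset.univ σ) :
    ∀ θ : ℝ, 0 < θ → fpSupport W θ Finset.univ σ := by
  obtain ⟨θ₀, hθ₀, hσ⟩ := h
  intro θ hθ
  rw [← div_mul_cancel₀ θ hθ₀.ne']
  exact hσ.mul_left (div_pos hθ hθ₀)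

theorem stmt_2 {n : ℕ} (W : Matrix (Fin n) (Fin n) ℝ)
    (hdiag : ∀ i, W i i = 0) (hoff : ∀ i j, i ≠ j → W i j < 0)
    (hdet : ∀ τ : Finset (Fin n),
      ((1 : Matrix τ τ ℝ) - W.submatrix (Subtype.val) (Subtype.val)).det ≠ 0)
    (hcramer : ∀ (θ : ℝ), 0 < θ → ∀ τ : Finset (Fin n), ∀ i : τ,
      (((1 : Matrix τ τ ℝ) - W.submatrix (Subtype.val) (Subtype.val)).updateCol i
        (fun _ => θ)).det ≠ 0)
    (σ : Finset (Fin n))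
    (h : ∃ θ : ℝ, 0 < θ ∧ fpSupport W θ Finset.univ σ) :
    ∀ θ : ℝ, 0 < θ → fpSupport W θ Finset.univ σ :=
  stmt_2_general W σ h
end

section
/- Let G be a directed graph on n ≥ 1 nodes such that G does not contain both a source (a node with no incoming edges) and a target (a node receiving edges from all other nodes). Then there exists a real n×n matrix W with W_ii = 0, W_ij < 0 for i ≠ j, W_ij > -1 precisely when j → i in G, and such that (I - W)x = θ·1 has a solution x with all entries strictly positive (for any fixed θ > 0). Concretely, one can achieve x = (θ/(n+r))·1 for some r with 0 < |r| < n. -/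
open Finset

/-- In a directed graph `G` (where `G a b` means there is an edge `a → b`),
a source is a node with no incoming edges. -/
def isSource {n : ℕ} (G : Fin n → Fin n → Prop) (s : Fin n) : Prop :=
  ∀ j, j ≠ s → ¬ G j s

/-- A target is a node receiving an edge from every other node. -/
def isTarget {n : ℕ} (G : Fin n → Fin n → Prop) (t : Fin n) : Prop :=
  ∀ j, j ≠ t → G j t

/-!
Take `W i j = -a i` on edges `j → i` and `W i j = -b i` on non-edges, with `0 < a i < 1 ≤ b i`.
Then `(1 - W)` applied to a constant vector `c` gives `c (1 + dᵢ aᵢ + mᵢ bᵢ)`, where `dᵢ` and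
`mᵢ = n - 1 - dᵢ` count the in-neighbours and non-in-neighbours of `i`, so it suffices to make
`1 + dᵢ aᵢ + mᵢ bᵢ = n + r` independent of `i`. Without a source every `dᵢ ≥ 1`, and
`aᵢ = 1 - 1 / (2 dᵢ)`, `b = 1` give `r = -1/2`; without a target every `mᵢ ≥ 1`, and `a = 1/2`,
`bᵢ = 1 + (dᵢ + 1) / (2 mᵢ)` give `r = 1/2`.
-/

section WeightMatrix

variable {ι : Type*} [DecidableEq ι]

def weightMatrix (G : ι → ι → Prop) [DecidableRel G] (a b : ι → ℝ) : Matrix ι ι ℝ :=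
  Matrix.of fun i j => if j = i then 0 else if G j i then -a i else -b i

variable {G : ι → ι → Prop} [DecidableRel G] {a b : ι → ℝ}

@[simp]
theorem weightMatrix_apply_self (i : ι) : weightMatrix G a b i i = 0 := by
  simp [weightMatrix]

theorem weightMatrix_apply_of_ne {i j : ι} (hij : i ≠ j) :
    weightMatrix G a b i j = if G j i then -a i else -b i := by
  simp [weightMatrix, Ne.symm hij]

theorem weightMatrix_neg (ha : ∀ i, 0 < a i) (hb : ∀ i, 0 < b i) {i j : ι} (hij : i ≠ j) :
    weightMatrix G a b i j < 0 := by
  rw [weightMatrix_apply_of_ne hij]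
  split_ifs
  · linarith [ha i]
  · linarith [hb i]

theorem neg_one_lt_weightMatrix_iff (ha : ∀ i, a i < 1) (hb : ∀ i, 1 ≤ b i) {i j : ι}
    (hij : i ≠ j) : -1 < weightMatrix G a b i j ↔ G j i := by
  rw [weightMatrix_apply_of_ne hij]
  split_ifs with hG
  · simp only [hG, iff_true]; linarith [ha i]
  · simp only [hG, iff_false, not_lt]; linarith [hb i]

end WeightMatrix

theorem Matrix.one_sub_mulVec_const_of_sum_row {ι K : Type*} [Fintype ι] [DecidableEq ι]
    [Field K] {W : Matrix ι ι K} {c : K} (hc : c ≠ 0) (hW : ∀ i, ∑ j, W i j = 1 - c) (θ : K) :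
    (1 - W).mulVec (fun _ => θ / c) = fun _ => θ := by
  rw [Matrix.sub_mulVec, Matrix.one_mulVec]
  ext i
  simp only [Pi.sub_apply, Matrix.mulVec, dotProduct, ← sum_mul, hW]
  field_simp
  ring

section Degrees

variable {ι : Type*} [Fintype ι] [DecidableEq ι] (G : ι → ι → Prop) [DecidableRel G]

def inDegree (i : ι) : ℕ := #{j ∈ univ.erase i | G j i}

def nonInDegree (i : ι) : ℕ := #{j ∈ univ.erase i | ¬ G j i}

theorem inDegree_pos_iff {i : ι} : 0 < inDegree G i ↔ ∃ j, j ≠ i ∧ G j i := by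
  simp [inDegree, card_pos, Finset.Nonempty]

theorem nonInDegree_pos_iff {i : ι} : 0 < nonInDegree G i ↔ ∃ j, j ≠ i ∧ ¬ G j i := by
  simp [nonInDegree, card_pos, Finset.Nonempty]

theorem inDegree_add_nonInDegree (i : ι) :
    (inDegree G i : ℝ) + nonInDegree G i = Fintype.card ι - 1 := by
  have hcard : inDegree G i + nonInDegree G i = Fintype.card ι - 1 := by
    rw [inDegree, nonInDegree, card_filter_add_card_filter_not,
      card_erase_of_mem (mem_univ i), card_univ]
  have hpos : 1 ≤ Fintype.card ι := Fintype.card_pos_iff.mpr ⟨i⟩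
  rw [← Nat.cast_add, hcard, Nat.cast_sub hpos, Nat.cast_one]

theorem sum_weightMatrix_row (a b : ι → ℝ) (i : ι) :
    ∑ j, weightMatrix G a b i j = -(inDegree G i * a i + nonInDegree G i * b i) := by
  rw [← sum_erase_add _ _ (mem_univ i), weightMatrix_apply_self, add_zero,
    sum_congr rfl fun j hj => weightMatrix_apply_of_ne (Ne.symm (ne_of_mem_erase hj)),
    sum_ite, sum_const, sum_const, nsmul_eq_mul, nsmul_eq_mul, inDegree, nonInDegree]
  ring

def IsBalancedWeights (a b : ι → ℝ) (r : ℝ) : Prop :=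
  (∀ i, 0 < a i) ∧ (∀ i, a i < 1) ∧ (∀ i, 1 ≤ b i) ∧
    ∀ i, 1 + inDegree G i * a i + nonInDegree G i * b i = Fintype.card ι + r

theorem isBalancedWeights_of_inDegree_pos (hd : ∀ i, 0 < inDegree G i) :
    IsBalancedWeights G (fun i => 1 - 1 / (2 * inDegree G i)) (fun _ => 1) (-1 / 2) := by
  have hd' (i : ι) : (1 : ℝ) ≤ inDegree G i := by exact_mod_cast hd i
  refine ⟨fun i => ?_, fun i => ?_, fun _ => le_rfl, fun i => ?_⟩
  · have : 1 / (2 * (inDegree G i : ℝ)) ≤ 1 / 2 := by gcongr; linarith [hd' i]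
    linarith
  · have : 0 < 1 / (2 * (inDegree G i : ℝ)) := by have := hd' i; positivity
    linarith
  · have := inDegree_add_nonInDegree G i
    have := hd' i
    field_simp
    linarith

theorem isBalancedWeights_of_nonInDegree_pos (hm : ∀ i, 0 < nonInDegree G i) :
    IsBalancedWeights G (fun _ => 1 / 2) (fun i => 1 + (inDegree G i + 1) / (2 * nonInDegree G i))
      (1 / 2) := by
  have hm' (i : ι) : (0 : ℝ) < nonInDegree G i := by exact_mod_cast hm i
  refine ⟨fun _ => by norm_num, fun _ => by norm_num, fun i => ?_, fun i => ?_⟩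
  · have := hm' i
    have : (0 : ℝ) ≤ (inDegree G i + 1) / (2 * nonInDegree G i) := by positivity
    linarith
  · have := inDegree_add_nonInDegree G i
    have := hm' i
    field_simp
    linarith

end Degrees

theorem inDegree_pos_or_nonInDegree_pos {n : ℕ} (G : Fin n → Fin n → Prop) [DecidableRel G]
    (h : ¬ ((∃ s, isSource G s) ∧ (∃ t, isTarget G t))) :
    (∀ i, 0 < inDegree G i) ∨ (∀ i, 0 < nonInDegree G i) := by
  simp only [inDegree_pos_iff, nonInDegree_pos_iff]
  by_contra! ⟨⟨s, hs⟩, t, ht⟩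
  exact h ⟨⟨s, hs⟩, t, ht⟩

theorem stmt_4 {n : ℕ} (hn : 1 ≤ n) (G : Fin n → Fin n → Prop)
    (h : ¬ ((∃ s, isSource G s) ∧ (∃ t, isTarget G t))) :
    ∃ (W : Matrix (Fin n) (Fin n) ℝ) (r : ℝ),
      (∀ i, W i i = 0) ∧
      (∀ i j, i ≠ j → W i j < 0) ∧
      (∀ i j, i ≠ j → (-1 < W i j ↔ G j i)) ∧
      0 < |r| ∧ |r| < n ∧
      ∀ θ : ℝ, 0 < θ →
        0 < θ / (n + r) ∧
        ((1 - W).mulVec (fun _ => θ / (n + r)) = fun _ => θ) := by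
  classical
  obtain ⟨a, b, r, hr, ha0, ha1, hb, hbal⟩ : ∃ a b r, |r| = 1 / 2 ∧ IsBalancedWeights G a b r := by
    rcases inDegree_pos_or_nonInDegree_pos G h with hd | hm
    · exact ⟨_, _, _, by norm_num, isBalancedWeights_of_inDegree_pos G hd⟩
    · exact ⟨_, _, _, by norm_num, isBalancedWeights_of_nonInDegree_pos G hm⟩
  simp only [Fintype.card_fin] at hbal
  have hn' : (1 : ℝ) ≤ n := by exact_mod_cast hn
  have hc : 0 < (n : ℝ) + r := by linarith [neg_abs_le r]
  have hrow (i : Fin n) : ∑ j, weightMatrix G a b i j = 1 - (n + r) := by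
    rw [sum_weightMatrix_row G a b i]
    linarith [hbal i]
  refine ⟨weightMatrix G a b, r, weightMatrix_apply_self,
    fun i j => weightMatrix_neg ha0 (fun i => by linarith [hb i]),
    fun i j => neg_one_lt_weightMatrix_iff ha1 hb, by rw [hr]; norm_num, by rw [hr]; linarith,
    fun θ hθ => ⟨div_pos hθ hc, Matrix.one_sub_mulVec_const_of_sum_row hc.ne' hrow θ⟩⟩
end

section
/- Let G be a directed graph on n nodes. Suppose that for every node i, the node-complement graph Ĝ(i) (obtained from G by complementing all outgoing edges of i) contains both a source and a target. Then n ≤ 2 or G is the directed 3-cycle. -/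
open Finset

/-- The node-complement `Ĝ(i)`: complement all outgoing edges of `i`,
leaving the rest of the graph intact (no self-loops are introduced). -/
def hatG {n : ℕ} (G : Fin n → Fin n → Prop) (i : Fin n) : Fin n → Fin n → Prop :=
  fun a b => if a = i then (b ≠ i ∧ ¬ G i b) else G a b

/-!
In `G`, the condition "`s` is a source of `Ĝ(i)`" says that `i` is the only in-neighbour of `s`
(none if `s = i`), and "`t` is a target of `Ĝ(i)`" says that `i` is the only node other than `t`
not pointing to `t`. In both cases the node `i` is determined by `s` (resp. `t`), so by finiteness
every node is a source of some `Ĝ(i)` and a target of some `Ĝ(i')`. Hence every node `v` has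
at most one in-neighbour and misses at most one, so `n ≤ 3`; for `n = 3` every node has exactly one
in-neighbour `f v ≠ v`, and `f` is onto, hence a fixed-point-free permutation of three points,
i.e. `G` is a directed 3-cycle.
-/

section OnlyPred

variable {α : Type*} {R : α → α → Prop} {v i i' : α}

/-- For `i = v` this says that `v` has no `R`-predecessor other than itself. -/
def OnlyPred (R : α → α → Prop) (v i : α) : Prop :=
  ∀ j ≠ v, (R j v ↔ j = i)

theorem OnlyPred.unique (h : OnlyPred R v i) (h' : OnlyPred R v i') : i = i' := by
  by_contra hne
  by_cases hi : i = v
  · subst hi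
    have hi' : i' ≠ i := Ne.symm hne
    exact hne ((h i' hi').1 ((h' i' hi').2 rfl)).symm
  · exact hne ((h' i hi).1 ((h i hi).2 rfl))

theorem OnlyPred.forall_exists [Finite α] (h : ∀ i, ∃ v, OnlyPred R v i) :
    ∀ v, ∃ i, OnlyPred R v i := by
  choose w hw using h
  have hinj : Function.Injective w := fun i i' he => (hw i).unique (he ▸ hw i')
  intro v
  obtain ⟨i, rfl⟩ := Finite.surjective_of_injective hinj v
  exact ⟨i, hw i⟩

theorem OnlyPred.univ_subset [Fintype α] [DecidableEq α] (h : OnlyPred R v i)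
    (h' : OnlyPred (fun a b => ¬ R a b) v i') : (univ : Finset α) ⊆ {v, i, i'} := by
  intro j _
  simp only [mem_insert, mem_singleton]
  by_cases hj : j = v
  · exact Or.inl hj
  · have := h j hj
    have := h' j hj
    tauto

theorem OnlyPred.card_le_three [Fintype α] (h : OnlyPred R v i)
    (h' : OnlyPred (fun a b => ¬ R a b) v i') : Fintype.card α ≤ 3 := by
  classical
  exact (card_le_card (h.univ_subset h')).trans Finset.card_le_three

theorem OnlyPred.ne_self [Fintype α] (h : OnlyPred R v i) (h' : OnlyPred (fun a b => ¬ R a b) v i')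
    (hcard : 2 < Fintype.card α) : i ≠ v := by
  classical
  rintro rfl
  have hsub := h.univ_subset h'
  rw [insert_eq_self.2 (mem_insert_self _ _)] at hsub
  exact absurd ((card_le_card hsub).trans card_le_two) (not_le.2 hcard)

end OnlyPred

section NodeComplement

variable {n : ℕ} {G : Fin n → Fin n → Prop} {i : Fin n}

theorem hatG_iff_of_ne {a b : Fin n} (hab : a ≠ b) : hatG G i a b ↔ (G a b ↔ a ≠ i) := by
  by_cases ha : a = i
  · subst ha
    simp [hatG, Ne.symm hab]
  · simp [hatG, ha]

theorem isSource_hatG_iff {s : Fin n} : isSource (hatG G i) s ↔ OnlyPred G s i :=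
  forall₂_congr fun j hj => by rw [hatG_iff_of_ne hj]; tauto

theorem isTarget_hatG_iff {t : Fin n} :
    isTarget (hatG G i) t ↔ OnlyPred (fun a b => ¬ G a b) t i :=
  forall₂_congr fun j hj => by rw [hatG_iff_of_ne hj]; tauto

end NodeComplement

theorem Fin.exists_equiv_of_surjective_of_forall_ne {f : Fin 3 → Fin 3}
    (hf : ∀ v, f v ≠ v) (hsurj : Function.Surjective f) :
    ∃ e : Fin 3 ≃ Fin 3, ∀ a b, a = f b ↔ e b = e a + 1 := by
  revert f
  decide

theorem stmt_6 {n : ℕ} (G : Fin n → Fin n → Prop)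
    (hirr : ∀ i, ¬ G i i)
    (h : ∀ i : Fin n, (∃ s, isSource (hatG G i) s) ∧ (∃ t, isTarget (hatG G i) t)) :
    n ≤ 2 ∨ ∃ e : Fin n ≃ Fin 3, ∀ a b, G a b ↔ e b = e a + 1 := by
  have hsrc : ∀ i, ∃ s, OnlyPred G s i :=
    fun i => (h i).1.imp fun _ => isSource_hatG_iff.1
  have hpred := OnlyPred.forall_exists hsrc
  have hnonpred := OnlyPred.forall_exists fun i => (h i).2.imp fun _ => isTarget_hatG_iff.1
  rcases le_or_gt n 2 with hn | hn
  · exact Or.inl hn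
  right
  obtain ⟨i, hi⟩ := hpred ⟨0, by omega⟩
  obtain ⟨i', hi'⟩ := hnonpred ⟨0, by omega⟩
  obtain rfl : n = 3 := le_antisymm (by simpa using hi.card_le_three hi') hn
  choose f hf using hpred
  have hfix : ∀ v, f v ≠ v := fun v =>
    (hnonpred v).elim fun _ hv => (hf v).ne_self hv (by simp)
  have hG : ∀ a b, G a b ↔ a = f b := fun a b => by
    by_cases hab : a = b
    · subst hab
      exact iff_of_false (hirr a) (hfix a).symm
    · exact hf b a hab
  have hsurj : Function.Surjective f := fun i =>
    (hsrc i).elim fun s hs => ⟨s, (hf s).unique hs⟩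
  simp_rw [hG]
  exact Fin.exists_equiv_of_surjective_of_forall_ne hfix hsurj
end

section
/- Let G be a directed graph on n nodes such that for every node i, the node-complement graph Ĝ(i) contains both a source and a target. Then every node of G has in-degree d satisfying n - 2 ≤ d ≤ 1. -/
open Finset

/-!
A source `s` of `Ĝ(i)` receives in `G` no edge except possibly `i → s`, and it does receive
`i → s` when `s ≠ i`. A target `t` of `Ĝ(i)` receives in `G` every edge except possibly
`i → t`. So sources of some `Ĝ(i)` have in-degree at most `1` and targets at least `n - 2`.
Choosing a source `s i` of every `Ĝ(i)` gives an injective map: if `s a = s b ≠ a` with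
`a ≠ b`, then `a → s a` in `G`, yet `s b` receives no edge from `a ∉ {b, s b}`. Hence every
node is a source of some `Ĝ(i)`. Targets of `Ĝ(i)` are exactly the sources of the
node-complement of the complementary relation `¬ G`, so likewise every node is a target of
some `Ĝ(i)`.
-/

section

variable {n : ℕ} {G : Fin n → Fin n → Prop} {i s t j : Fin n}

theorem isSource.hatG_adj_of_ne (hs : isSource (hatG G i) s) (hsi : s ≠ i) : G i s := by
  simpa [hatG, hsi] using hs i hsi.symm

theorem isSource.hatG_not_adj (hs : isSource (hatG G i) s) (hjs : j ≠ s) (hji : j ≠ i) :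
    ¬ G j s := by
  simpa [hatG, hji] using hs j hjs

theorem isTarget_hatG_iff_isSource_hatG_compl :
    isTarget (hatG G i) t ↔ isSource (hatG (fun a b => ¬ G a b) i) t := by
  refine forall₂_congr fun j hjt => ?_
  by_cases hji : j = i
  · subst hji
    simp [hatG, Ne.symm hjt]
  · simp [hatG, hji]

theorem injective_of_forall_isSource_hatG {f : Fin n → Fin n}
    (hf : ∀ i, isSource (hatG G i) (f i)) : Function.Injective f := by
  have key : ∀ a b, f a = f b → a ≠ b → f a ≠ a → False := fun a b hab hne ha =>
    (hf b).hatG_not_adj (hab ▸ Ne.symm ha) hne (hab ▸ (hf a).hatG_adj_of_ne ha)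
  intro a b hab
  by_contra hne
  by_cases ha : f a = a
  · exact key b a hab.symm (Ne.symm hne) (by rw [← hab, ha]; exact hne)
  · exact key a b hab hne ha

theorem injective_of_forall_isTarget_hatG {f : Fin n → Fin n}
    (hf : ∀ i, isTarget (hatG G i) (f i)) : Function.Injective f :=
  injective_of_forall_isSource_hatG fun i => isTarget_hatG_iff_isSource_hatG_compl.mp (hf i)

variable [DecidableRel G]

theorem card_inNeighbors_le_one_of_isSource_hatG (hs : isSource (hatG G i) s) :
    #{j | j ≠ s ∧ G j s} ≤ 1 := by
  calc #{j | j ≠ s ∧ G j s} ≤ #{i} := card_le_card fun j hj => by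
        obtain ⟨hjs, hG⟩ := (mem_filter.mp hj).2
        exact mem_singleton.mpr (by_contra fun hji => hs.hatG_not_adj hjs hji hG)
    _ = 1 := card_singleton i

theorem sub_two_le_card_inNeighbors_of_isTarget_hatG (ht : isTarget (hatG G i) t) :
    n - 2 ≤ #{j | j ≠ t ∧ G j t} := by
  have hs := isTarget_hatG_iff_isSource_hatG_compl.mp ht
  have hcompl : #{j | ¬ (j ≠ t ∧ G j t)} ≤ 2 := by
    calc #{j | ¬ (j ≠ t ∧ G j t)} ≤ #{i, t} := card_le_card fun j hj => by
          obtain hjt | hG := not_and_or.mp (mem_filter.mp hj).2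
          · simp [not_not.mp hjt]
          · by_contra hjit
            simp only [mem_insert, mem_singleton, not_or] at hjit
            exact hs.hatG_not_adj hjit.2 hjit.1 hG
      _ ≤ 2 := card_le_two
  have hsum := card_filter_add_card_filter_not (s := univ) fun j => j ≠ t ∧ G j t
  rw [card_univ, Fintype.card_fin] at hsum
  omega

end

theorem stmt_7_general {n : ℕ} (G : Fin n → Fin n → Prop) [DecidableRel G]
    (h : ∀ i : Fin n, (∃ s, isSource (hatG G i) s) ∧ (∃ t, isTarget (hatG G i) t)) :
    ∀ k : Fin n,
      n - 2 ≤ (Finset.univ.filter fun j => j ≠ k ∧ G j k).card ∧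
      (Finset.univ.filter fun j => j ≠ k ∧ G j k).card ≤ 1 := by
  choose s hs using fun i => (h i).1
  choose t ht using fun i => (h i).2
  have s_surj := Finite.injective_iff_surjective.mp (injective_of_forall_isSource_hatG hs)
  have t_surj := Finite.injective_iff_surjective.mp (injective_of_forall_isTarget_hatG ht)
  intro k
  obtain ⟨i, rfl⟩ := t_surj k
  obtain ⟨i', hi'⟩ := s_surj (t i)
  exact ⟨sub_two_le_card_inNeighbors_of_isTarget_hatG (ht i),
    card_inNeighbors_le_one_of_isSource_hatG (hi' ▸ hs i')⟩

theorem stmt_7 {n : ℕ} (G : Fin n → Fin n → Prop) [DecidableRel G]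
    (hirr : ∀ i, ¬ G i i)
    (h : ∀ i : Fin n, (∃ s, isSource (hatG G i) s) ∧ (∃ t, isTarget (hatG G i) t)) :
    ∀ k : Fin n,
      n - 2 ≤ (Finset.univ.filter fun j => j ≠ k ∧ G j k).card ∧
      (Finset.univ.filter fun j => j ≠ k ∧ G j k).card ≤ 1 :=
  stmt_7_general G h
end

section
/- Let G be a directed graph on n nodes such that for every node i, Ĝ(i) contains a target. Then each node k of G is a target in exactly one of the n graphs Ĝ(1), …, Ĝ(n). -/
/-!
If `k` is a target of `Ĝ(i)` with `i ≠ k`, then `i ↛ k` in `G`, while every other node `j ≠ i, k`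
has `j → k` in `G`. So two distinct nodes `i, i'` cannot both have `k` as a target of their
complements: the one different from `k` would have to be both adjacent and non-adjacent to `k`.
Hence `i ↦ (a target of Ĝ(i))` is injective, and by finiteness a bijection of the nodes.
-/

open Finset

section

variable {n : ℕ} (G : Fin n → Fin n → Prop) {i j k : Fin n}

lemma not_adj_of_isTarget_hatG (hik : i ≠ k) (ht : isTarget (hatG G i) k) : ¬ G i k := by
  have hik' := ht i hik
  simp only [hatG] at hik'
  exact hik'.2

lemma adj_of_isTarget_hatG (hji : j ≠ i) (hjk : j ≠ k) (ht : isTarget (hatG G i) k) :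
    G j k := by
  simpa [hatG, hji] using ht j hjk

lemma not_isTarget_hatG_of_ne (hij : i ≠ j) (hik : i ≠ k) (hi : isTarget (hatG G i) k) :
    ¬ isTarget (hatG G j) k := fun hj =>
  not_adj_of_isTarget_hatG G hik hi (adj_of_isTarget_hatG G hij hik hj)

lemma eq_of_isTarget_hatG (hi : isTarget (hatG G i) k) (hj : isTarget (hatG G j) k) :
    i = j := by
  by_contra hij
  rcases eq_or_ne i k with rfl | hik
  · exact not_isTarget_hatG_of_ne G (Ne.symm hij) (Ne.symm hij) hj hi
  · exact not_isTarget_hatG_of_ne G hij hik hi hj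

end

theorem stmt_8_general {n : ℕ} (G : Fin n → Fin n → Prop)
    (h : ∀ i : Fin n, ∃ t, isTarget (hatG G i) t) :
    ∀ k : Fin n, ∃! i : Fin n, isTarget (hatG G i) k := by
  choose target hTarget using h
  have target_injective : Function.Injective target := fun a b hab =>
    eq_of_isTarget_hatG G (hTarget a) (hab ▸ hTarget b)
  intro k
  obtain ⟨i, rfl⟩ := Finite.surjective_of_injective target_injective k
  exact ⟨i, hTarget i, fun j hj => eq_of_isTarget_hatG G hj (hTarget i)⟩

theorem stmt_8 {n : ℕ} (G : Fin n → Fin n → Prop)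
    (hirr : ∀ i, ¬ G i i)
    (h : ∀ i : Fin n, ∃ t, isTarget (hatG G i) t) :
    ∀ k : Fin n, ∃! i : Fin n, isTarget (hatG G i) k :=
  stmt_8_general G h
end

section
/- Let G be a directed graph containing a source and a target, and let ω ∪ τ = [n] be a source-target decomposition (ω contains a source of G, τ contains a target of G, G|_ω is a directed acyclic graph, and there are no edges from τ to ω). If v ∈ τ is a source of G|_τ (receives no edges from within τ), then (ω ∪ {v}) ∪ (τ \ {v}) is again a source-target decomposition of G. -/
open Finset

/-- The induced subgraph of `G` on `ω` is a DAG: there is an ordering of the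
vertices such that every edge within `ω` goes strictly forward. -/
def isDAGOn {n : ℕ} (G : Fin n → Fin n → Prop) (ω : Finset (Fin n)) : Prop :=
  ∃ f : Fin n → ℕ, ∀ i ∈ ω, ∀ j ∈ ω, G i j → f i < f j

/-- A source-target decomposition of `G`: a partition `ω ⊔ τ = [n]` such that `ω`
contains a source of `G`, `τ` contains a target of `G`, `G|_ω` is a DAG, and there
are no edges from `τ` to `ω`. -/
def isSTDecomp {n : ℕ} (G : Fin n → Fin n → Prop) (ω τ : Finset (Fin n)) : Prop :=
  ω ∪ τ = Finset.univ ∧ Disjoint ω τ ∧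
  (∃ s ∈ ω, isSource G s) ∧ (∃ t ∈ τ, isTarget G t) ∧
  isDAGOn G ω ∧ (∀ i ∈ τ, ∀ j ∈ ω, ¬ G i j)


lemma isDAGOn_insert {n : ℕ} {G : Fin n → Fin n → Prop} {ω : Finset (Fin n)} {v : Fin n}
    (hω : isDAGOn G ω) (hvv : ¬ G v v) (hvω : ∀ j ∈ ω, ¬ G v j) :
    isDAGOn G (insert v ω) := by
  obtain ⟨f, hf⟩ := hω
  refine ⟨fun i => if i = v then univ.sup f + 1 else f i, ?_⟩
  intro i hi j hj hij
  by_cases hiv : i = v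
  · subst hiv
    by_cases hjv : j = i
    · exact absurd (hjv ▸ hij) hvv
    · exact absurd hij (hvω j (mem_of_mem_insert_of_ne hj hjv))
  by_cases hjv : j = v
  · subst hjv
    simpa [hiv] using Nat.lt_succ_of_le (le_sup (f := f) (mem_univ i))
  · simpa [hiv, hjv] using
      hf i (mem_of_mem_insert_of_ne hi hiv) j (mem_of_mem_insert_of_ne hj hjv) hij

lemma isTarget_ne_of_no_edge_from {n : ℕ} {G : Fin n → Fin n → Prop} {t v u : Fin n}
    (ht : isTarget G t) (huv : u ≠ v) (hno : ¬ G u v) : t ≠ v := by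
  rintro rfl
  exact hno (ht u huv)

theorem stmt_13 {n : ℕ} (G : Fin n → Fin n → Prop)
    (hirr : ∀ i, ¬ G i i)
    (ω τ : Finset (Fin n)) (hdec : isSTDecomp G ω τ)
    (hτ : 2 ≤ τ.card)
    (v : Fin n) (hv : v ∈ τ)
    -- `v` is a source of `G|_τ`: it receives no edges from within `τ`
    (hsrc : ∀ i ∈ τ, i ≠ v → ¬ G i v) :
    isSTDecomp G (insert v ω) (τ.erase v) := by
  obtain ⟨hunion, hdisj, ⟨s, hs, hsS⟩, ⟨t, ht, htT⟩, hdag, hnoedge⟩ := hdec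
  obtain ⟨u, hu, huv⟩ := (one_lt_card_iff_nontrivial.mp hτ).exists_ne v
  have htv : t ≠ v := isTarget_ne_of_no_edge_from htT huv (hsrc u hu huv)
  refine ⟨?_, ?_, ⟨s, mem_insert_of_mem hs, hsS⟩, ⟨t, mem_erase.mpr ⟨htv, ht⟩, htT⟩,
    isDAGOn_insert hdag (hirr v) (hnoedge v hv), ?_⟩
  · rw [insert_union, ← union_insert, insert_erase hv, hunion]
  · exact disjoint_insert_left.mpr
      ⟨notMem_erase v τ, disjoint_of_subset_right (erase_subset v τ) hdisj⟩
  · intro i hi j hj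
    obtain ⟨hiv, hiτ⟩ := mem_erase.mp hi
    rcases mem_insert.mp hj with rfl | hjω
    · exact hsrc i hiτ hiv
    · exact hnoedge i hiτ j hjω
end
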